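/- Let K be a field of characteristic zero and let D = ∂_x + Σⱼ₌₁ʳ (a(x)yⱼ + bⱼ(x)) ∂_{yⱼ} be a derivation of R = K[x, y₁, …, y_r]. Then Im D is a Mathieu-Zhao subspace of R if and only if a(x) ∈ K (a constant). -/

import Mathlib

/-!
Grade `K[x, y₁, …, y_r]` by total degree in the `yⱼ`. On the component of degree `n`, `D` acts as
`∂ₓ + n·a(x)` up to terms of degree `n - 1`, which come from the `bⱼ ∂_{yⱼ}`.

If `a = c` is constant, `∂ₓ + n·c` is surjective on `K[x]`, so induction on `n` shows that `D` is
surjective, and `R` itself is trivially a Mathieu-Zhao subspace.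

If `deg a ≥ 1`, then `1 = D x` lies in `Im D`, and a Mathieu-Zhao subspace containing `1` is all of
`R`. But `y₁ ∉ Im D`: if `D f = y₁`, then `f` has some `y`-degree `d ≥ 1` (otherwise the degree-`1`
component of `D f` vanishes), and the degree-`d` components give `∂ₓ f_d + d·a·f_d ∈ {0, y₁}`,
whereas the `x`-degree of the left side is `deg a + deg_x f_d ≥ 1`.
-/

/-- A `K`-subspace `M` of a commutative `K`-algebra is a Mathieu-Zhao subspace if whenever
`u^m ∈ M` for all `m ≥ 1`, one has `v·u^m ∈ M` for all sufficiently large `m`. -/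
def IsMathieuZhao {K R : Type*} [Field K] [CommRing R] [Algebra K R]
    (M : Submodule K R) : Prop :=
  ∀ u v : R, (∀ m : ℕ, 1 ≤ m → u ^ m ∈ M) → ∃ N : ℕ, ∀ m : ℕ, N ≤ m → v * u ^ m ∈ M

section IsMathieuZhao

variable {K R : Type*} [Field K] [CommRing R] [Algebra K R]

theorem isMathieuZhao_top : IsMathieuZhao (⊤ : Submodule K R) :=
  fun _ _ _ => ⟨0, fun _ _ => Submodule.mem_top⟩

theorem IsMathieuZhao.eq_top_of_one_mem {M : Submodule K R} (hM : IsMathieuZhao M)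
    (h1 : (1 : R) ∈ M) : M = ⊤ := by
  refine eq_top_iff.mpr fun v _ => ?_
  obtain ⟨N, hN⟩ := hM 1 v fun m _ => by rwa [one_pow]
  simpa using hN N le_rfl

end IsMathieuZhao

theorem Derivation.coe_finset_sum {R A M ι : Type*} [CommSemiring R] [CommSemiring A]
    [Algebra R A] [AddCommMonoid M] [Module A M] [Module R M] (s : Finset ι)
    (D : ι → Derivation R A M) : ⇑(∑ i ∈ s, D i) = ∑ i ∈ s, ⇑(D i) :=
  map_sum Derivation.coeFnAddMonoidHom D s

namespace Polynomial

theorem exists_derivative_add_smul_eq {K B : Type*} [Field K] [CharZero K] [CommRing B]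
    [Algebra K B] (c : K) (p : B[X]) : ∃ g : B[X], derivative g + c • g = p := by
  let T : B[X] →ₗ[K] B[X] := derivative.restrictScalars K + c • LinearMap.id
  suffices hmon : ∀ n b, monomial n b ∈ LinearMap.range T from
    (p.induction_on' (fun _ _ => add_mem) hmon : p ∈ LinearMap.range T)
  intro n b
  by_cases hc : c = 0
  · refine ⟨monomial (n + 1) ((n + 1 : K)⁻¹ • b), ?_⟩
    have hb : b * (n + 1 : B) = (n + 1 : K) • b := by
      rw [Algebra.smul_def, mul_comm]
      simp
    simp only [T, hc, zero_smul, add_zero, LinearMap.coe_restrictScalars, derivative_monomial]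
    rw [Nat.add_sub_cancel, smul_mul_assoc, Nat.cast_succ, hb, smul_smul,
      inv_mul_cancel₀ (Nat.cast_add_one_ne_zero n), one_smul]
  · induction n generalizing b with
    | zero => exact ⟨c⁻¹ • C b, by simp [T, smul_smul, hc]⟩
    | succ n ih =>
      have hT : T (c⁻¹ • monomial (n + 1) b) =
          c⁻¹ • monomial n (b * (n + 1)) + monomial (n + 1) b := by
        simp [T, smul_smul, hc]
      rw [← add_sub_cancel_left (c⁻¹ • monomial n (b * (n + 1))) (monomial (n + 1) b), ← hT]
      exact sub_mem (LinearMap.mem_range_self T _) (Submodule.smul_mem _ _ (ih _))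

theorem natDegree_derivative_add_nsmul_mul {B : Type*} [CommRing B] [IsDomain B] [CharZero B]
    {n : ℕ} (hn : n ≠ 0) {P G : B[X]} (hP : 0 < P.natDegree) (hG : G ≠ 0) :
    (derivative G + n • (P * G)).natDegree = P.natDegree + G.natDegree := by
  have hPG : (n • (P * G)).natDegree = P.natDegree + G.natDegree := by
    rw [nsmul_eq_mul, ← C_eq_natCast, natDegree_C_mul (by exact_mod_cast hn),
      natDegree_mul (ne_zero_of_natDegree_gt hP) hG]
  have hlt : (derivative G).natDegree < (n • (P * G)).natDegree :=
    hPG ▸ (natDegree_derivative_le G).trans_lt (by omega)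
  rw [natDegree_add_eq_right_of_natDegree_lt hlt, hPG]

end Polynomial

namespace MvPolynomial

section WeightedHomogeneousComponent

variable {R σ M : Type*} [CommSemiring R] [AddCancelCommMonoid M] {w : σ → M}

theorem weightedHomogeneousComponent_pderiv (n : M) (i : σ) (φ : MvPolynomial σ R) :
    weightedHomogeneousComponent w n (pderiv i φ) =
      pderiv i (weightedHomogeneousComponent w (n + w i) φ) := by
  classical
  ext m
  simp only [coeff_weightedHomogeneousComponent, coeff_pderiv, map_add, Finsupp.weight_single,
    one_smul, add_left_inj]
  split_ifs <;> simp

theorem weightedHomogeneousComponent_X_mul_pderiv (n : M) (i : σ) (φ : MvPolynomial σ R) :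
    weightedHomogeneousComponent w n (X i * pderiv i φ) =
      X i * pderiv i (weightedHomogeneousComponent w n φ) := by
  classical
  induction φ using MvPolynomial.induction_on' with
  | monomial m r =>
    rw [X_mul_pderiv_monomial, map_nsmul,
      weightedHomogeneousComponent_of_mem (isWeightedHomogeneous_monomial w m r rfl)]
    split_ifs <;> simp only [X_mul_pderiv_monomial, map_zero, mul_zero, smul_zero]
  | add p q hp hq => simp only [map_add, mul_add, hp, hq]

theorem IsWeightedHomogeneous.weightedHomogeneousComponent_mul {ψ : MvPolynomial σ R}
    (hψ : IsWeightedHomogeneous w ψ 0) (n : M) (φ : MvPolynomial σ R) :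
    weightedHomogeneousComponent w n (ψ * φ) = ψ * weightedHomogeneousComponent w n φ := by
  classical
  induction φ using MvPolynomial.induction_on' with
  | monomial m r =>
    have hm := isWeightedHomogeneous_monomial w m r rfl
    rw [weightedHomogeneousComponent_of_mem hm,
      weightedHomogeneousComponent_of_mem (by simpa using hψ.mul hm)]
    split_ifs <;> simp
  | add p q hp hq => simp only [map_add, mul_add, hp, hq]

theorem mem_of_forall_weightedHomogeneousComponent_mem {S : Submodule R (MvPolynomial σ R)}
    {φ : MvPolynomial σ R} (h : ∀ n, weightedHomogeneousComponent w n φ ∈ S) : φ ∈ S := by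
  rw [← sum_weightedHomogeneousComponent w φ,
    finsum_eq_sum _ (weightedHomogeneousComponent_finsupp φ)]
  exact Submodule.sum_mem _ fun n _ => h n

theorem weightedHomogeneousComponent_weightedTotalDegree_ne_zero {w : σ → ℕ}
    {φ : MvPolynomial σ R} (hφ : φ ≠ 0) :
    weightedHomogeneousComponent w (weightedTotalDegree w φ) φ ≠ 0 := by
  classical
  obtain ⟨m, hm, hmax⟩ :=
    Finset.exists_mem_eq_sup φ.support (support_nonempty.mpr hφ) (Finsupp.weight w)
  intro h
  have := congrArg (coeff m) h
  rw [coeff_weightedHomogeneousComponent, weightedTotalDegree, hmax, if_pos rfl,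
    coeff_zero] at this
  exact mem_support_iff.mp hm this

end WeightedHomogeneousComponent

section OptionEquivLeft

theorem optionEquivLeft_pderiv_none {R σ : Type*} [CommSemiring R]
    (p : MvPolynomial (Option σ) R) :
    optionEquivLeft R σ (pderiv none p) = Polynomial.derivative (optionEquivLeft R σ p) := by
  induction p using MvPolynomial.induction_on with
  | C a => simp [optionEquivLeft_C]
  | add p q hp hq => simp [hp, hq]
  | mul_X p i hp =>
    cases i <;> simp [hp, optionEquivLeft_X_none, optionEquivLeft_X_some] <;> ring

theorem optionEquivLeft_aeval_X_none {R σ : Type*} [CommSemiring R] (a : Polynomial R) :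
    optionEquivLeft R σ (Polynomial.aeval (X none) a) =
      a.map (algebraMap R (MvPolynomial σ R)) := by
  induction a using Polynomial.induction_on with
  | C a => simp [optionEquivLeft_C]
  | add p q hp hq => simp [hp, hq]
  | monomial n a h => simp_all [pow_succ, ← mul_assoc, optionEquivLeft_X_none]

variable {K σ : Type*} [Field K] [CharZero K]

theorem exists_pderiv_none_add_smul_eq (c : K) (f : MvPolynomial (Option σ) K) :
    ∃ g, pderiv none g + c • g = f := by
  obtain ⟨G, hG⟩ := Polynomial.exists_derivative_add_smul_eq c (optionEquivLeft K σ f)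
  refine ⟨(optionEquivLeft K σ).symm G, (optionEquivLeft K σ).injective ?_⟩
  simpa [optionEquivLeft_pderiv_none] using hG

theorem degreeOf_none_pderiv_none_add_nsmul_aeval_mul {n : ℕ} (hn : n ≠ 0) {a : Polynomial K}
    (ha : 0 < a.natDegree) {g : MvPolynomial (Option σ) K} (hg : g ≠ 0) :
    degreeOf none (pderiv none g + n • (Polynomial.aeval (X none) a * g)) =
      a.natDegree + degreeOf none g := by
  have hinj := (algebraMap K (MvPolynomial σ K)).injective
  rw [← natDegree_optionEquivLeft, map_add, map_nsmul, map_mul, optionEquivLeft_pderiv_none,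
    optionEquivLeft_aeval_X_none, Polynomial.natDegree_derivative_add_nsmul_mul hn,
    Polynomial.natDegree_map_eq_of_injective hinj, natDegree_optionEquivLeft]
  · rwa [Polynomial.natDegree_map_eq_of_injective hinj]
  · exact EmbeddingLike.map_ne_zero_iff.mpr hg

end OptionEquivLeft

end MvPolynomial

open MvPolynomial

section AffineDerivation

variable {K ι : Type*} [Field K]

def yWeight : Option ι → ℕ := fun i => i.elim 0 fun _ => 1

@[simp]
theorem yWeight_none : yWeight (none : Option ι) = 0 := rfl

@[simp]
theorem yWeight_some (j : ι) : yWeight (some j) = 1 := rfl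

theorem isWeightedHomogeneous_aeval_X_none (p : Polynomial K) :
    IsWeightedHomogeneous yWeight (Polynomial.aeval (X none : MvPolynomial (Option ι) K) p) 0 := by
  induction p using Polynomial.induction_on with
  | C a => simpa using isWeightedHomogeneous_C yWeight a
  | add p q hp hq => simpa using hp.add hq
  | monomial n a h =>
    simpa [pow_succ, ← mul_assoc] using h.mul (isWeightedHomogeneous_X K yWeight none)

theorem sum_X_some_mul_pderiv_of_isWeightedHomogeneous [Fintype ι]
    {φ : MvPolynomial (Option ι) K} {n : ℕ} (hφ : IsWeightedHomogeneous yWeight φ n) :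
    ∑ j, X (some j) * pderiv (some j) φ = n • φ := by
  simpa [Fintype.sum_option] using hφ.sum_weight_X_mul_pderiv

variable [Fintype ι]

noncomputable def affineDerivation (a : Polynomial K) (b : ι → Polynomial K) :
    Derivation K (MvPolynomial (Option ι) K) (MvPolynomial (Option ι) K) :=
  pderiv none + ∑ j, (Polynomial.aeval (X none : MvPolynomial (Option ι) K) a * X (some j)
    + Polynomial.aeval (X none) (b j)) • pderiv (some j)

variable {a : Polynomial K} {b : ι → Polynomial K}

theorem eq_affineDerivation
    {D : Derivation K (MvPolynomial (Option ι) K) (MvPolynomial (Option ι) K)}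
    (hDx : D (X none) = 1)
    (hDy : ∀ j, D (X (some j)) =
      Polynomial.aeval (X none) a * X (some j) + Polynomial.aeval (X none) (b j)) :
    D = affineDerivation a b := by
  classical
  refine derivation_ext fun i => ?_
  cases i <;> simp [affineDerivation, Derivation.coe_finset_sum, hDx, hDy, Pi.single_apply]

theorem affineDerivation_apply (f : MvPolynomial (Option ι) K) :
    affineDerivation a b f = pderiv none f
      + Polynomial.aeval (X none) a * ∑ j, X (some j) * pderiv (some j) f
      + ∑ j, Polynomial.aeval (X none) (b j) * pderiv (some j) f := by
  simp [affineDerivation, Derivation.coe_finset_sum, Finset.mul_sum, add_mul, mul_assoc,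
    Finset.sum_add_distrib, add_assoc]

theorem weightedHomogeneousComponent_affineDerivation (n : ℕ) (f : MvPolynomial (Option ι) K) :
    weightedHomogeneousComponent yWeight n (affineDerivation a b f) =
      pderiv none (weightedHomogeneousComponent yWeight n f)
        + n • (Polynomial.aeval (X none) a * weightedHomogeneousComponent yWeight n f)
        + ∑ j, Polynomial.aeval (X none) (b j) *
            pderiv (some j) (weightedHomogeneousComponent yWeight (n + 1) f) := by
  simp only [affineDerivation_apply, map_add, map_sum,
    (isWeightedHomogeneous_aeval_X_none _).weightedHomogeneousComponent_mul,
    weightedHomogeneousComponent_X_mul_pderiv, weightedHomogeneousComponent_pderiv,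
    sum_X_some_mul_pderiv_of_isWeightedHomogeneous
      (weightedHomogeneousComponent_isWeightedHomogeneous _ _), mul_smul_comm, yWeight_none,
    yWeight_some, add_zero]

variable [CharZero K]

theorem affineDerivation_C_surjective (c : K) :
    Function.Surjective (affineDerivation (Polynomial.C c) b) := by
  set S := LinearMap.range (affineDerivation (Polynomial.C c) b).toLinearMap
  suffices h : ∀ n f, weightedHomogeneousComponent yWeight n f ∈ S from
    fun f => mem_of_forall_weightedHomogeneousComponent_mem (h · f)
  intro n
  induction n using Nat.strong_induction_on with
  | _ n ih =>
  intro f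
  obtain ⟨g₀, hg₀⟩ :=
    exists_pderiv_none_add_smul_eq ((n : K) * c) (weightedHomogeneousComponent yWeight n f)
  set g := weightedHomogeneousComponent yWeight n g₀
  have hg : IsWeightedHomogeneous yWeight g n :=
    weightedHomogeneousComponent_isWeightedHomogeneous _ _
  have hsolve : pderiv none g + ((n : K) * c) • g = weightedHomogeneousComponent yWeight n f := by
    simpa [weightedHomogeneousComponent_pderiv,
      weightedHomogeneousComponent_eq_self (weightedHomogeneousComponent_isWeightedHomogeneous _ _)]
      using congrArg (weightedHomogeneousComponent yWeight n) hg₀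
  set h := ∑ j, Polynomial.aeval (X none) (b j) * pderiv (some j) g
  have hDg : affineDerivation (Polynomial.C c) b g =
      weightedHomogeneousComponent yWeight n f + h := by
    rw [affineDerivation_apply, sum_X_some_mul_pderiv_of_isWeightedHomogeneous hg, ← hsolve,
      Polynomial.aeval_C, algebraMap_eq, smul_eq_C_mul, map_mul, map_natCast, nsmul_eq_mul]
    ring
  have hh : h ∈ S := by
    refine mem_of_forall_weightedHomogeneousComponent_mem (w := yWeight) fun m => ?_
    rcases lt_or_ge m n with hm | hm
    · exact ih m hm h
    · have hg' : weightedHomogeneousComponent yWeight (m + 1) g = 0 :=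
        hg.weightedHomogeneousComponent_ne _ (by omega)
      simp [h, map_sum, (isWeightedHomogeneous_aeval_X_none _).weightedHomogeneousComponent_mul,
        weightedHomogeneousComponent_pderiv, hg']
  rw [← add_sub_cancel_right (weightedHomogeneousComponent yWeight n f) h, ← hDg]
  exact sub_mem (LinearMap.mem_range_self _ g) hh

theorem X_some_notMem_range_affineDerivation (ha : 0 < a.natDegree) (j : ι) :
    X (some j) ∉ LinearMap.range (affineDerivation a b).toLinearMap := by
  rintro ⟨f, hf : affineDerivation a b f = X (some j)⟩
  set d := weightedTotalDegree yWeight f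
  have hy : ∀ n, weightedHomogeneousComponent yWeight n (X (some j) : MvPolynomial (Option ι) K) =
      if n = 1 then X (some j) else 0 := fun n =>
    weightedHomogeneousComponent_of_mem (isWeightedHomogeneous_X K yWeight (some j))
  have htop : ∀ n, d ≤ n → weightedHomogeneousComponent yWeight n (X (some j)) =
      pderiv none (weightedHomogeneousComponent yWeight n f)
        + n • (Polynomial.aeval (X none) a * weightedHomogeneousComponent yWeight n f) := by
    intro n hn
    rw [← hf, weightedHomogeneousComponent_affineDerivation,
      weightedHomogeneousComponent_eq_zero (n + 1) f (by omega)]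
    simp
  rcases Nat.eq_zero_or_pos d with hd | hd
  · have h1 := htop 1 (by omega)
    rw [hy, if_pos rfl, weightedHomogeneousComponent_eq_zero 1 f (by omega)] at h1
    simp at h1
  · have hf0 : f ≠ 0 := by
      rintro rfl
      simp [d, weightedTotalDegree_zero] at hd
    have hdeg := congrArg (degreeOf none) (htop d le_rfl)
    rw [degreeOf_none_pderiv_none_add_nsmul_aeval_mul hd.ne' ha
      (weightedHomogeneousComponent_weightedTotalDegree_ne_zero hf0), hy] at hdeg
    have : degreeOf none (if d = 1 then (X (some j) : MvPolynomial (Option ι) K) else 0) = 0 := by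
      split_ifs
      exacts [degreeOf_X_of_ne (Option.some_ne_none j).symm, degreeOf_zero _]
    omega

end AffineDerivation

/-- For `D = ∂x + Σⱼ (a(x)yⱼ + bⱼ(x)) ∂yⱼ`, `Im D` is a Mathieu-Zhao subspace iff `a ∈ K`. -/
theorem stmt15 {K : Type*} [Field K] [CharZero K] (r : ℕ) (hr : 0 < r)
    (a : Polynomial K) (b : Fin r → Polynomial K)
    (D : Derivation K (MvPolynomial (Option (Fin r)) K) (MvPolynomial (Option (Fin r)) K))
    (hDx : D (MvPolynomial.X none) = 1)
    (hDy : ∀ j : Fin r, D (MvPolynomial.X (some j)) =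
      Polynomial.aeval (MvPolynomial.X (none : Option (Fin r))) a * MvPolynomial.X (some j)
        + Polynomial.aeval (MvPolynomial.X (none : Option (Fin r))) (b j)) :
    IsMathieuZhao (LinearMap.range D.toLinearMap) ↔ ∃ c : K, a = Polynomial.C c := by
  obtain rfl := eq_affineDerivation hDx hDy
  constructor
  · intro hMZ
    by_contra hconst
    have ha : 0 < a.natDegree :=
      Nat.pos_of_ne_zero fun h => hconst ⟨_, Polynomial.eq_C_of_natDegree_eq_zero h⟩
    have htop := hMZ.eq_top_of_one_mem ⟨X none, hDx⟩
    exact X_some_notMem_range_affineDerivation ha ⟨0, hr⟩ (htop ▸ Submodule.mem_top)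
  · rintro ⟨c, rfl⟩
    rw [LinearMap.range_eq_top.mpr (affineDerivation_C_surjective c)]
    exact isMathieuZhao_top
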